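/- arXiv:1905.11629 — 3 statements merged into one kernel-verified Lean document; each statement's English description precedes it below -/
import Mathlib

section
/- For density matrices ρ, σ and ε ∈ (0,1), the smooth min-relative entropy D_min^ε(ρ‖σ) converges to D_min(ρ‖σ) as ε → 0: lim_{ε→0} D_min^ε(ρ‖σ) = D_min(ρ‖σ) = −log₂ Tr[Π_ρ σ]. -/
open Matrix
open scoped BigOperators ComplexOrder

/-- Apply a real function to a Hermitian matrix via its spectral decomposition
(junk value `0` for non-Hermitian input). -/
noncomputable def mfun {n : Type*} [Fintype n] [DecidableEq n]
    (f : ℝ → ℝ) (A : Matrix n n ℂ) : Matrix n n ℂ :=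
  if h : A.IsHermitian then
    (h.eigenvectorUnitary : Matrix n n ℂ) *
      Matrix.diagonal (fun i => (f (h.eigenvalues i) : ℂ)) *
      star (h.eigenvectorUnitary : Matrix n n ℂ)
  else 0

/-- Real power of a Hermitian matrix. -/
noncomputable def mpow {n : Type*} [Fintype n] [DecidableEq n]
    (A : Matrix n n ℂ) (p : ℝ) : Matrix n n ℂ :=
  mfun (fun x => x ^ p) A

/-- Square root of a positive semidefinite matrix. -/
noncomputable def msqrt {n : Type*} [Fintype n] [DecidableEq n]
    (A : Matrix n n ℂ) : Matrix n n ℂ :=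
  mfun Real.sqrt A

/-- Trace norm (Schatten 1-norm). -/
noncomputable def traceNorm {n : Type*} [Fintype n] [DecidableEq n]
    (A : Matrix n n ℂ) : ℝ :=
  ((msqrt (Aᴴ * A)).trace).re

/-- Schatten `p`-norm. -/
noncomputable def schattenNorm {n : Type*} [Fintype n] [DecidableEq n]
    (p : ℝ) (A : Matrix n n ℂ) : ℝ :=
  (((mfun (fun x => x ^ (p / 2)) (Aᴴ * A)).trace).re) ^ (1 / p)

/-- Uhlmann fidelity `‖√ρ √σ‖₁²`. -/
noncomputable def fidelity {n : Type*} [Fintype n] [DecidableEq n]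
    (ρ σ : Matrix n n ℂ) : ℝ :=
  (traceNorm (msqrt ρ * msqrt σ)) ^ 2

/-- A density matrix: positive semidefinite with unit trace. -/
def IsDensity {n : Type*} [Fintype n] (ρ : Matrix n n ℂ) : Prop :=
  ρ.PosSemidef ∧ ρ.trace = 1

/-- A CPTP map (quantum channel): Choi matrix PSD and trace preserving. -/
def IsCPTP {I J : Type*} [Fintype I] [DecidableEq I] [Fintype J] [DecidableEq J]
    (N : Matrix I I ℂ →ₗ[ℂ] Matrix J J ℂ) : Prop :=
  (Matrix.of (fun (p q : I × J) =>
      N (Matrix.single p.1 q.1 1) p.2 q.2)).PosSemidef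
  ∧ ∀ A : Matrix I I ℂ, (N A).trace = A.trace

/-- `P` is the orthogonal projection onto the support of `ρ`. -/
def IsSupportProj {n : Type*} [Fintype n] (ρ P : Matrix n n ℂ) : Prop :=
  P.IsHermitian ∧ P * P = P ∧
    LinearMap.range P.mulVecLin = LinearMap.range ρ.mulVecLin

/-- Max-relative entropy `D_max(ρ‖σ) := inf {λ ≥ 0 : ρ ≤ 2^λ σ}` (with value `⊤` if
no such `λ` exists). -/
noncomputable def Dmax {n : Type*} [Fintype n] (ρ σ : Matrix n n ℂ) : EReal :=
  sInf {x : EReal | ∃ l : ℝ, 0 ≤ l ∧ (((2:ℝ) ^ l) • σ - ρ).PosSemidef ∧ x = (l : EReal)}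

/-- Smooth max-relative entropy (trace-distance smoothing). -/
noncomputable def DmaxSmooth {n : Type*} [Fintype n] [DecidableEq n]
    (ε : ℝ) (ρ σ : Matrix n n ℂ) : EReal :=
  sInf {x : EReal | ∃ ρt : Matrix n n ℂ, IsDensity ρt ∧
    (1/2) * traceNorm (ρt - ρ) ≤ ε ∧ x = Dmax ρt σ}

/-- Smooth min-relative entropy (hypothesis testing relative entropy). -/
noncomputable def DminSmooth {n : Type*} [Fintype n] [DecidableEq n]
    (ε : ℝ) (ρ σ : Matrix n n ℂ) : ℝ :=
  - Real.logb 2 (sInf {t : ℝ | ∃ Λ : Matrix n n ℂ, Λ.PosSemidef ∧ (1 - Λ).PosSemidef ∧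
      1 - ε ≤ ((Λ * ρ).trace).re ∧ t = ((Λ * σ).trace).re})

/-- Petz–Rényi relative entropy `D_α(ρ‖σ) = (α−1)⁻¹ log₂ Tr[ρ^α σ^{1−α}]`. -/
noncomputable def Dpetz {n : Type*} [Fintype n] [DecidableEq n]
    (α : ℝ) (ρ σ : Matrix n n ℂ) : ℝ :=
  (α - 1)⁻¹ * Real.logb 2 (((mpow ρ α * mpow σ (1 - α)).trace).re)

/-- Sandwiched Rényi relative entropy
`D̃_α(ρ‖σ) = (α−1)⁻¹ log₂ Tr[(σ^{(1−α)/2α} ρ σ^{(1−α)/2α})^α]`. -/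
noncomputable def Dsand {n : Type*} [Fintype n] [DecidableEq n]
    (α : ℝ) (ρ σ : Matrix n n ℂ) : ℝ :=
  (α - 1)⁻¹ * Real.logb 2
    (((mpow (mpow σ ((1 - α)/(2*α)) * ρ * mpow σ ((1 - α)/(2*α))) α).trace).re)

/-- Umegaki relative entropy `D(ρ‖σ) = Tr[ρ (log₂ ρ − log₂ σ)]`. -/
noncomputable def relEnt {n : Type*} [Fintype n] [DecidableEq n]
    (ρ σ : Matrix n n ℂ) : ℝ :=
  ((ρ * (mfun (Real.logb 2) ρ - mfun (Real.logb 2) σ)).trace).re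

/-- `n`-fold tensor (Kronecker) power of a matrix. -/
noncomputable def tpow {I : Type*} (A : Matrix I I ℂ) (k : ℕ) :
    Matrix (Fin k → I) (Fin k → I) ℂ :=
  Matrix.of fun i j => ∏ t, A (i t) (j t)

/-- The qubit state `|0⟩⟨0|`. -/
noncomputable def e00 : Matrix (Fin 2) (Fin 2) ℂ := Matrix.single 0 0 1

/-- The qubit state `|1⟩⟨1|`. -/
noncomputable def e11 : Matrix (Fin 2) (Fin 2) ℂ := Matrix.single 1 1 1

/-- The state `π_M = M⁻¹|0⟩⟨0| + (1 − M⁻¹)|1⟩⟨1|`. -/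
noncomputable def piM (M : ℝ) : Matrix (Fin 2) (Fin 2) ℂ :=
  (M⁻¹ : ℝ) • e00 + ((1 - M⁻¹ : ℝ)) • e11


/-!
The test `Λ = P` is admissible for every `ε ≥ 0`, so the optimal type-II error is at most
`Tr[Pσ]`. Conversely, since `ρ` has finite spectrum, `P ≤ c ρ` for some `c ≥ 0`. Writing
`P = PΛ + P(1 - Λ)` and using the triangle inequality for the seminorm `X ↦ √Tr[X σ Xᴴ]`, any
test with `Tr[(1 - Λ) ρ] ≤ ε` satisfies `√Tr[Pσ] ≤ √Tr[Λσ] + √(c ε)`. The optimal type-II error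
is therefore squeezed to `Tr[Pσ]`, and `-log₂` is continuous there when `Tr[Pσ] > 0`; when
`Tr[Pσ] = 0` the optimal error is `0` for every `ε > 0`.
-/

open Matrix Filter Topology
open scoped MatrixOrder Matrix.Norms.L2Operator

lemma CStarAlgebra.mul_self_le_self {A : Type*} [CStarAlgebra A] [PartialOrder A]
    [StarOrderedRing A] {a : A} (h0 : 0 ≤ a) (h1 : a ≤ 1) : a * a ≤ a := by
  simpa [sq] using CStarAlgebra.pow_antitone h0 h1 one_le_two

namespace Matrix

variable {n : Type*} [Fintype n]

lemma mul_eq_of_range_le {E A B : Matrix n n ℂ} (hEA : E * A = A)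
    (h : LinearMap.range B.mulVecLin ≤ LinearMap.range A.mulVecLin) : E * B = B := by
  classical
  refine ext_of_mulVec_single fun j => ?_
  obtain ⟨y, hy⟩ := h ⟨Pi.single j 1, rfl⟩
  simp only [mulVecLin_apply] at hy
  rw [← mulVec_mulVec, ← hy, mulVec_mulVec, hEA]

lemma sqrt_re_trace_add_le {σ : Matrix n n ℂ} (hσ : 0 ≤ σ) (X Y : Matrix n n ℂ) :
    √(((X + Y) * σ * (X + Y)ᴴ).trace.re) ≤
      √((X * σ * Xᴴ).trace.re) + √((Y * σ * Yᴴ).trace.re) :=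
  letI := σ.toMatrixSeminormedAddCommGroup hσ.posSemidef
  norm_add_le X Y

lemma trace_mul_mul_conjTranspose_of_isStarProjection {P Y : Matrix n n ℂ}
    (hP : IsStarProjection P) (hY : IsSelfAdjoint Y) (σ : Matrix n n ℂ) :
    (P * Y * σ * (P * Y)ᴴ).trace = (Y * P * Y * σ).trace := by
  rw [conjTranspose_mul, ← star_eq_conjTranspose, ← star_eq_conjTranspose, hY.star_eq,
    hP.isSelfAdjoint.star_eq, trace_mul_comm, ← mul_assoc, ← mul_assoc, mul_assoc Y P P,
    hP.isIdempotentElem.eq]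

variable [DecidableEq n]

lemma continuousOn_real_spectrum (A : Matrix n n ℂ) (f : ℝ → ℝ) :
    ContinuousOn f (spectrum ℝ A) :=
  finite_real_spectrum.continuousOn f

lemma re_trace_mul_nonneg {A B : Matrix n n ℂ} (hA : 0 ≤ A) (hB : 0 ≤ B) :
    0 ≤ (A * B).trace.re := by
  obtain ⟨X, rfl⟩ := CStarAlgebra.nonneg_iff_eq_star_mul_self.mp hA
  rw [mul_assoc, trace_mul_comm, mul_assoc, ← mul_assoc]
  exact (Complex.nonneg_iff.mp (star_right_conjugate_nonneg hB X).posSemidef.trace_nonneg).1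

lemma re_trace_mul_le_re_trace_mul {A B C : Matrix n n ℂ} (hAB : A ≤ B) (hC : 0 ≤ C) :
    (A * C).trace.re ≤ (B * C).trace.re := by
  have := re_trace_mul_nonneg (sub_nonneg.mpr hAB) hC
  rwa [sub_mul, trace_sub, Complex.sub_re, sub_nonneg] at this

lemma re_trace_mul_le_re_trace_mul' {A B C : Matrix n n ℂ} (hAB : A ≤ B) (hC : 0 ≤ C) :
    (C * A).trace.re ≤ (C * B).trace.re := by
  simpa only [trace_mul_comm C] using re_trace_mul_le_re_trace_mul hAB hC

lemma le_one_of_nonneg_of_trace_eq_one {σ : Matrix n n ℂ} (hσ : 0 ≤ σ) (htr : σ.trace = 1) :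
    σ ≤ 1 := by
  have hH := hσ.posSemidef.isHermitian
  have hsum : ∑ i, hH.eigenvalues i = 1 := by
    simpa using congrArg Complex.re (hH.trace_eq_sum_eigenvalues.symm.trans htr)
  rw [CFC.le_one_iff (R := ℝ) σ hH.isSelfAdjoint, hH.spectrum_real_eq_range_eigenvalues]
  rintro _ ⟨i, rfl⟩
  exact hsum ▸ Finset.single_le_sum (fun j _ => hσ.posSemidef.eigenvalues_nonneg j)
    (Finset.mem_univ i)

lemma re_trace_conj_mul_le_of_le_one {A Λ σ : Matrix n n ℂ} (hA : A ≤ 1) (hΛ0 : 0 ≤ Λ)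
    (hΛ1 : Λ ≤ 1) (hσ : 0 ≤ σ) : (Λ * A * Λ * σ).trace.re ≤ (Λ * σ).trace.re := calc
  _ ≤ (Λ * Λ * σ).trace.re := by
    refine re_trace_mul_le_re_trace_mul ?_ hσ
    simpa [hΛ0.isSelfAdjoint.star_eq] using star_left_conjugate_le_conjugate hA Λ
  _ ≤ (Λ * σ).trace.re :=
    re_trace_mul_le_re_trace_mul (CStarAlgebra.mul_self_le_self hΛ0 hΛ1) hσ

lemma re_trace_conj_mul_le_of_nonneg {A Λ σ : Matrix n n ℂ} (hA : 0 ≤ A) (hΛ0 : 0 ≤ Λ)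
    (hΛ1 : Λ ≤ 1) (hσ : σ ≤ 1) : (Λ * A * Λ * σ).trace.re ≤ (Λ * A).trace.re := calc
  _ ≤ (Λ * A * Λ).trace.re := by
    simpa only [trace_mul_comm _ σ, mul_one] using re_trace_mul_le_re_trace_mul' hσ
      (by simpa [hΛ0.isSelfAdjoint.star_eq] using star_left_conjugate_nonneg hA Λ)
  _ = (Λ * Λ * A).trace.re := by rw [trace_mul_comm, ← mul_assoc]
  _ ≤ (Λ * A).trace.re := re_trace_mul_le_re_trace_mul (CStarAlgebra.mul_self_le_self hΛ0 hΛ1) hA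

lemma sqrt_re_trace_le_add {ρ σ P Λ : Matrix n n ℂ} {c : ℝ} (hσ0 : 0 ≤ σ) (hσ1 : σ ≤ 1)
    (hP : IsStarProjection P) (hPc : P ≤ c • ρ) (hΛ0 : 0 ≤ Λ) (hΛ1 : Λ ≤ 1) :
    √((P * σ).trace.re) ≤ √((Λ * σ).trace.re) + √(c * ((1 - Λ) * ρ).trace.re) := by
  have hΛ'0 : 0 ≤ 1 - Λ := sub_nonneg.mpr hΛ1
  have hΛ'1 : 1 - Λ ≤ 1 := sub_le_self 1 hΛ0
  have hPΛ : ((P * Λ) * σ * (P * Λ)ᴴ).trace.re ≤ (Λ * σ).trace.re := by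
    rw [trace_mul_mul_conjTranspose_of_isStarProjection hP hΛ0.isSelfAdjoint]
    exact re_trace_conj_mul_le_of_le_one hP.le_one hΛ0 hΛ1 hσ0
  have hPΛ' : ((P * (1 - Λ)) * σ * (P * (1 - Λ))ᴴ).trace.re ≤
      c * ((1 - Λ) * ρ).trace.re := calc
    _ = ((1 - Λ) * P * (1 - Λ) * σ).trace.re := by
      rw [trace_mul_mul_conjTranspose_of_isStarProjection hP hΛ'0.isSelfAdjoint]
    _ ≤ ((1 - Λ) * P).trace.re := re_trace_conj_mul_le_of_nonneg hP.nonneg hΛ'0 hΛ'1 hσ1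
    _ ≤ ((1 - Λ) * (c • ρ)).trace.re := re_trace_mul_le_re_trace_mul' hPc hΛ'0
    _ = c * ((1 - Λ) * ρ).trace.re := by simp [trace_smul]
  calc √((P * σ).trace.re)
      = √((P * Λ + P * (1 - Λ)) * σ * (P * Λ + P * (1 - Λ))ᴴ).trace.re := by
        rw [← mul_add, add_sub_cancel,
          trace_mul_mul_conjTranspose_of_isStarProjection hP (.one _), one_mul, mul_one]
    _ ≤ _ := (sqrt_re_trace_add_le hσ0 _ _).trans
      (add_le_add (Real.sqrt_le_sqrt hPΛ) (Real.sqrt_le_sqrt hPΛ'))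

end Matrix

section SupportProjection

variable {n : Type*} [Fintype n] {ρ P : Matrix n n ℂ}

lemma IsSupportProj.isStarProjection (hP : IsSupportProj ρ P) : IsStarProjection P :=
  ⟨hP.2.1, hP.1.isSelfAdjoint⟩

lemma IsSupportProj.mul_eq (hP : IsSupportProj ρ P) : P * ρ = ρ :=
  mul_eq_of_range_le hP.2.1 hP.2.2.ge

variable [DecidableEq n]

/-- `x * x⁻¹` is the indicator of `x ≠ 0`, because `0⁻¹ = 0`. -/
lemma IsSupportProj.eq_cfc (hρ : IsSelfAdjoint ρ) (hP : IsSupportProj ρ P) :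
    P = cfc (fun x : ℝ => x * x⁻¹) ρ := by
  have hcont := continuousOn_real_spectrum ρ
  have hQ : cfc (fun x : ℝ => x * x⁻¹) ρ = ρ * cfc (·⁻¹ : ℝ → ℝ) ρ := by
    rw [cfc_mul (fun x : ℝ => x) (·⁻¹) ρ (hcont _) (hcont _), cfc_id' ℝ ρ]
  have hQρ : cfc (fun x : ℝ => x * x⁻¹) ρ * ρ = ρ := by
    nth_rw 2 [← cfc_id' ℝ ρ]
    refine (cfc_mul (fun x : ℝ => x * x⁻¹) (fun x => x) ρ (hcont _) (hcont _)).symm.trans ?_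
    refine (cfc_congr fun x _ => ?_).trans (cfc_id' ℝ ρ)
    rcases eq_or_ne x 0 with rfl | hx
    · simp
    · simp [hx]
  have hQP : cfc (fun x : ℝ => x * x⁻¹) ρ * P = P := mul_eq_of_range_le hQρ hP.2.2.le
  have hPQ : P * cfc (fun x : ℝ => x * x⁻¹) ρ = cfc (fun x : ℝ => x * x⁻¹) ρ := by
    rw [hQ, ← mul_assoc, hP.mul_eq]
  have hPsa := hP.isStarProjection.isSelfAdjoint
  calc P = star (cfc (fun x : ℝ => x * x⁻¹) ρ * P) := by rw [hQP, hPsa.star_eq]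
    _ = P * cfc (fun x : ℝ => x * x⁻¹) ρ := by
      rw [star_mul, hPsa.star_eq, IsSelfAdjoint.cfc.star_eq]
    _ = _ := hPQ

lemma IsSupportProj.exists_le_smul (hρ : 0 ≤ ρ) (hP : IsSupportProj ρ P) :
    ∃ c : ℝ, 0 ≤ c ∧ P ≤ c • ρ := by
  obtain ⟨c, hc⟩ := (finite_real_spectrum (A := ρ)).image (·⁻¹) |>.bddAbove
  refine ⟨max c 0, le_max_right _ _, ?_⟩
  have hcont := continuousOn_real_spectrum ρ
  rw [hP.eq_cfc hρ.isSelfAdjoint, ← cfc_const_mul_id (max c 0) ρ,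
    cfc_le_iff _ _ ρ (hcont _) (hcont _)]
  intro x hx
  rcases (spectrum_nonneg_of_nonneg hρ hx).eq_or_lt with rfl | hxpos
  · simp
  · have : x⁻¹ ≤ max c 0 := (hc ⟨x, hx, rfl⟩).trans (le_max_left _ _)
    rw [mul_inv_cancel₀ hxpos.ne']
    calc (1 : ℝ) = x⁻¹ * x := (inv_mul_cancel₀ hxpos.ne').symm
      _ ≤ max c 0 * x := by gcongr

end SupportProjection

lemma Real.sub_two_mul_sqrt_mul_le {T t u : ℝ} (hT : 0 ≤ T) (ht : 0 ≤ t) (hu : 0 ≤ u)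
    (h : √T ≤ √t + u) : T - 2 * √T * u ≤ t := by
  have hT' := Real.sq_sqrt hT
  have ht' := Real.sq_sqrt ht
  rcases le_total (√T) u with hTu | huT
  · nlinarith [Real.sqrt_nonneg T]
  · nlinarith [Real.sqrt_nonneg t]

section HypothesisTesting

variable {n : Type*} [Fintype n] [DecidableEq n] {ρ σ P : Matrix n n ℂ} {ε : ℝ}

def typeIIErrors (ε : ℝ) (ρ σ : Matrix n n ℂ) : Set ℝ :=
  {t : ℝ | ∃ Λ : Matrix n n ℂ, Λ.PosSemidef ∧ (1 - Λ).PosSemidef ∧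
    1 - ε ≤ ((Λ * ρ).trace).re ∧ t = ((Λ * σ).trace).re}

lemma dminSmooth_eq_neg_logb_sInf :
    DminSmooth ε ρ σ = -Real.logb 2 (sInf (typeIIErrors ε ρ σ)) := rfl

lemma nonneg_of_mem_typeIIErrors (hσ : 0 ≤ σ) {t : ℝ} (ht : t ∈ typeIIErrors ε ρ σ) : 0 ≤ t := by
  obtain ⟨Λ, hΛ, -, -, rfl⟩ := ht
  exact re_trace_mul_nonneg hΛ.nonneg hσ

lemma IsSupportProj.re_trace_mem_typeIIErrors (hρ : IsDensity ρ) (hP : IsSupportProj ρ P)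
    (hε : 0 ≤ ε) : (P * σ).trace.re ∈ typeIIErrors ε ρ σ :=
  ⟨P, hP.isStarProjection.nonneg.posSemidef, hP.isStarProjection.le_one,
    by simpa [hP.mul_eq, hρ.2] using hε, rfl⟩

lemma sInf_typeIIErrors_mem_Icc (hρ : IsDensity ρ) (hσ : 0 ≤ σ) (hP : IsSupportProj ρ P)
    (hε : 0 ≤ ε) : sInf (typeIIErrors ε ρ σ) ∈ Set.Icc 0 (P * σ).trace.re :=
  ⟨le_csInf ⟨_, hP.re_trace_mem_typeIIErrors hρ hε⟩ fun _ => nonneg_of_mem_typeIIErrors hσ,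
    csInf_le ⟨0, fun _ => nonneg_of_mem_typeIIErrors hσ⟩ (hP.re_trace_mem_typeIIErrors hρ hε)⟩

lemma sub_le_sInf_typeIIErrors (hρ : IsDensity ρ) (hσ : IsDensity σ) (hP : IsSupportProj ρ P)
    {c : ℝ} (hc : 0 ≤ c) (hPc : P ≤ c • ρ) (hε : 0 ≤ ε) :
    (P * σ).trace.re - 2 * √((P * σ).trace.re) * √(c * ε) ≤ sInf (typeIIErrors ε ρ σ) := by
  refine le_csInf ⟨_, hP.re_trace_mem_typeIIErrors hρ hε⟩ ?_
  rintro _ ⟨Λ, hΛ0, hΛ1, hΛρ, rfl⟩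
  have hσ0 := hσ.1.nonneg
  have htypeI : ((1 - Λ) * ρ).trace.re ≤ ε := by
    simp only [sub_mul, one_mul, trace_sub, Complex.sub_re, hρ.2, Complex.one_re]
    linarith
  refine Real.sub_two_mul_sqrt_mul_le (re_trace_mul_nonneg hP.isStarProjection.nonneg hσ0)
    (re_trace_mul_nonneg hΛ0.nonneg hσ0) (Real.sqrt_nonneg _) ?_
  calc √((P * σ).trace.re)
      ≤ √((Λ * σ).trace.re) + √(c * ((1 - Λ) * ρ).trace.re) :=
        sqrt_re_trace_le_add hσ0 (le_one_of_nonneg_of_trace_eq_one hσ0 hσ.2) hP.isStarProjection hPc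
          hΛ0.nonneg hΛ1
    _ ≤ √((Λ * σ).trace.re) + √(c * ε) := by gcongr

lemma tendsto_sInf_typeIIErrors (hρ : IsDensity ρ) (hσ : IsDensity σ) (hP : IsSupportProj ρ P) :
    Tendsto (fun ε => sInf (typeIIErrors ε ρ σ)) (𝓝[>] 0) (𝓝 (P * σ).trace.re) := by
  obtain ⟨c, hc, hPc⟩ := hP.exists_le_smul hρ.1.nonneg
  set T := (P * σ).trace.re
  have hlower : Tendsto (fun ε => T - 2 * √T * √(c * ε)) (𝓝[>] 0) (𝓝 T) := by
    have h : Continuous fun ε => T - 2 * √T * √(c * ε) := by fun_prop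
    simpa using (h.tendsto 0).mono_left nhdsWithin_le_nhds
  refine tendsto_of_tendsto_of_tendsto_of_le_of_le' hlower tendsto_const_nhds ?_ ?_ <;>
    filter_upwards [self_mem_nhdsWithin] with ε hε
  · exact sub_le_sInf_typeIIErrors hρ hσ hP hc hPc hε.le
  · exact (sInf_typeIIErrors_mem_Icc hρ hσ.1.nonneg hP hε.le).2

end HypothesisTesting

theorem dminSmooth_tendsto_dmin {n : Type*} [Fintype n] [DecidableEq n]
    (ρ σ : Matrix n n ℂ) (hρ : IsDensity ρ) (hσ : IsDensity σ)
    (P : Matrix n n ℂ) (hP : IsSupportProj ρ P) :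
    Filter.Tendsto (fun ε => DminSmooth ε ρ σ) (nhdsWithin 0 (Set.Ioi 0))
      (nhds (- Real.logb 2 (((P * σ).trace).re))) := by
  simp only [dminSmooth_eq_neg_logb_sInf]
  rcases (re_trace_mul_nonneg hP.isStarProjection.nonneg hσ.1.nonneg).eq_or_lt with hT | hT
  · refine tendsto_const_nhds.congr' ?_
    filter_upwards [self_mem_nhdsWithin] with ε hε
    obtain ⟨h0, hle⟩ := sInf_typeIIErrors_mem_Icc hρ hσ.1.nonneg hP (Set.mem_Ioi.mp hε).le
    rw [le_antisymm hle (hT ▸ h0)]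
  · exact (Real.continuousAt_logb hT.ne').neg.tendsto.comp (tendsto_sInf_typeIIErrors hρ hσ hP)
end

section
/- (Exact distinguishability cost equals D_max) Let ρ, σ be density matrices with ρ ≤ 2^λ σ for some finite λ > 0. Then ω := (2^λ σ − ρ)/(2^λ − 1) is a density matrix, and the channel P(τ) := ⟨0|τ|0⟩ρ + ⟨1|τ|1⟩ω satisfies P(|0⟩⟨0|) = ρ and P(π_{2^λ}) = σ, where π_{2^λ} := 2^{-λ}|0⟩⟨0| + (1 − 2^{-λ})|1⟩⟨1|. Conversely, any channel P with P(|0⟩⟨0|) = ρ and P(π_M) = σ satisfies log₂ M ≥ D_max(ρ‖σ). -/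
open Matrix
open scoped BigOperators ComplexOrder

/-!
Since `2^λ σ - ρ ≥ 0` and both states have unit trace, `ω` is a state and
`σ = 2^{-λ} ρ + (1 - 2^{-λ}) ω`, which is the mixture `P` produces from `π_{2^λ}`.
Conversely `M π_M - |0⟩⟨0| = (M - 1) |1⟩⟨1|`, so `M σ - ρ = (M - 1) P(|1⟩⟨1|)`, and
`P(|1⟩⟨1|)` is a diagonal block of the Choi matrix of `P`, hence positive semidefinite.
Thus `ρ ≤ 2^{log₂ M} σ`, i.e. `D_max(ρ‖σ) ≤ log₂ M`.
-/

theorem posSemidef_apply_single_of_posSemidef_choi {I J : Type*} [Fintype I] [DecidableEq I]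
    [Fintype J] [DecidableEq J] {N : Matrix I I ℂ →ₗ[ℂ] Matrix J J ℂ}
    (hN : (Matrix.of fun (p q : I × J) => N (Matrix.single p.1 q.1 1) p.2 q.2).PosSemidef)
    (i : I) : (N (Matrix.single i i 1)).PosSemidef :=
  hN.submatrix fun j : J => (i, j)

theorem Dmax_le_of_posSemidef {n : Type*} [Fintype n] {ρ σ : Matrix n n ℂ} {l : ℝ} (hl : 0 ≤ l)
    (h : (((2:ℝ) ^ l) • σ - ρ).PosSemidef) : Dmax ρ σ ≤ l :=
  sInf_le ⟨l, hl, h, rfl⟩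

theorem Dmax_le_logb {n : Type*} [Fintype n] {ρ σ : Matrix n n ℂ} {M : ℝ} (hM : 1 ≤ M)
    (h : (M • σ - ρ).PosSemidef) : Dmax ρ σ ≤ ((Real.logb 2 M : ℝ) : EReal) :=
  Dmax_le_of_posSemidef (Real.logb_nonneg one_lt_two hM) <| by
    rwa [Real.rpow_logb two_pos (by norm_num) (by linarith)]

theorem piM_apply_zero_zero (M : ℝ) : piM M 0 0 = ((M⁻¹ : ℝ) : ℂ) := by
  simp [piM, e00, e11]

theorem piM_apply_one_one (M : ℝ) : piM M 1 1 = ((1 - M⁻¹ : ℝ) : ℂ) := by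
  simp [piM, e00, e11]

theorem smul_piM_sub_e00 {M : ℝ} (hM : M ≠ 0) : M • piM M - e00 = (M - 1) • e11 := by
  rw [piM, smul_add, smul_smul, smul_smul, mul_inv_cancel₀ hM, one_smul, add_sub_cancel_left,
    mul_sub, mul_one, mul_inv_cancel₀ hM]

theorem posSemidef_smul_map_piM_sub_map_e00 {n : Type*} [Fintype n] [DecidableEq n]
    {P : Matrix (Fin 2) (Fin 2) ℂ →ₗ[ℂ] Matrix n n ℂ} (hP : IsCPTP P) {M : ℝ} (hM : 1 ≤ M) :
    (M • P (piM M) - P e00).PosSemidef := by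
  rw [← P.map_smul_of_tower, ← map_sub, smul_piM_sub_e00 (by linarith), P.map_smul_of_tower]
  exact (posSemidef_apply_single_of_posSemidef_choi hP.1 1).smul (sub_nonneg.mpr hM)

theorem inv_smul_add_one_sub_inv_smul_inv_sub_one_smul_sub {𝕜 V : Type*} [Field 𝕜]
    [AddCommGroup V] [Module 𝕜 V] {M : 𝕜} (hM₀ : M ≠ 0) (hM₁ : M ≠ 1) (x y : V) :
    M⁻¹ • x + (1 - M⁻¹) • ((M - 1)⁻¹ • (M • y - x)) = y := by
  have hcoeff : (1 - M⁻¹) * (M - 1)⁻¹ = M⁻¹ := by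
    field_simp [sub_ne_zero.mpr hM₁]
  rw [smul_smul, hcoeff, smul_sub, smul_smul, inv_mul_cancel₀ hM₀, one_smul, add_sub_cancel]

theorem isDensity_inv_sub_one_smul_sub {n : Type*} [Fintype n] {ρ σ : Matrix n n ℂ} {M : ℝ}
    (hM : 1 < M) (hρ : ρ.trace = 1) (hσ : σ.trace = 1) (h : (M • σ - ρ).PosSemidef) :
    IsDensity ((M - 1)⁻¹ • (M • σ - ρ)) := by
  refine ⟨h.smul (inv_nonneg.mpr (sub_nonneg.mpr hM.le)), ?_⟩
  have hM₁ : (M : ℂ) - 1 ≠ 0 := by exact_mod_cast (sub_pos.mpr hM).ne'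
  rw [trace_smul, trace_sub, trace_smul, hρ, hσ, ← Complex.coe_smul, ← Complex.coe_smul]
  simp [hM₁]

theorem exact_distinguishability_cost {n : Type*} [Fintype n] [DecidableEq n]
    (ρ σ : Matrix n n ℂ) (hρ : IsDensity ρ) (hσ : IsDensity σ)
    (l : ℝ) (hl : 0 < l) (h : (((2:ℝ)^l) • σ - ρ).PosSemidef) :
    (IsDensity ((((2:ℝ)^l - 1)⁻¹) • (((2:ℝ)^l) • σ - ρ))
      ∧ (e00 0 0) • ρ + (e00 1 1) • ((((2:ℝ)^l - 1)⁻¹) • (((2:ℝ)^l) • σ - ρ)) = ρ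
      ∧ (piM ((2:ℝ)^l) 0 0) • ρ
          + (piM ((2:ℝ)^l) 1 1) • ((((2:ℝ)^l - 1)⁻¹) • (((2:ℝ)^l) • σ - ρ)) = σ)
    ∧ ∀ (M : ℝ), 1 ≤ M → ∀ P : Matrix (Fin 2) (Fin 2) ℂ →ₗ[ℂ] Matrix n n ℂ,
        IsCPTP P → P e00 = ρ → P (piM M) = σ →
        Dmax ρ σ ≤ ((Real.logb 2 M : ℝ) : EReal) := by
  have h2l : 1 < (2:ℝ) ^ l := Real.one_lt_rpow one_lt_two hl
  refine ⟨⟨isDensity_inv_sub_one_smul_sub h2l hρ.2 hσ.2 h, by simp [e00], ?_⟩, ?_⟩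
  · rw [piM_apply_zero_zero, piM_apply_one_one, Complex.coe_smul, Complex.coe_smul]
    exact inv_smul_add_one_sub_inv_smul_inv_sub_one_smul_sub (by positivity) h2l.ne' ρ σ
  · rintro M hM P hP rfl rfl
    exact Dmax_le_logb hM (posSemidef_smul_map_piM_sub_map_e00 hP hM)
end

section
/- (Exact distillable distinguishability equals D_min) Let ρ, σ be density matrices with Tr[Π_ρ σ] ≠ 0. The measurement channel M(ω) := Tr[Π_ρ ω]|0⟩⟨0| + Tr[(I − Π_ρ)ω]|1⟩⟨1| satisfies M(ρ) = |0⟩⟨0| and M(σ) = π_{1/Tr[Π_ρ σ]}. Conversely, any channel P with P(ρ) = |0⟩⟨0| and P(σ) = π_M satisfies log₂ M ≤ D_min(ρ‖σ) = −log₂ Tr[Π_ρ σ]. -/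
open Matrix
open scoped BigOperators ComplexOrder

/-!
Measuring `{Π_ρ, 1 - Π_ρ}` sends `ρ` to `|0⟩⟨0|` and `σ` to `π_{1/Tr[Π_ρ σ]}`. Conversely, pull
the effect `|0⟩⟨0|` back through a channel `Q`: `Λ = Q†(|0⟩⟨0|)` satisfies `0 ≤ Λ ≤ 1` and
`Tr[Λρ] = 1`, so `(1 - Λ)ρ = 0`, i.e. `Λ` acts as the identity on the support of `ρ`, whence
`Λ ≥ Π_ρ`. Therefore `Tr[Π_ρ σ] ≤ Tr[Λσ] = ⟨0|Q(σ)|0⟩ = 1/M`.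
-/

theorem IsStarProjection.le_of_mul_eq {R : Type*} [Ring R] [PartialOrder R] [StarRing R]
    [StarOrderedRing R] {p a : R} (hp : IsStarProjection p) (ha : 0 ≤ a) (h : a * p = p) :
    p ≤ a := by
  have hpa : p * a = p := by
    simpa [star_mul, hp.isSelfAdjoint.star_eq, (IsSelfAdjoint.of_nonneg ha).star_eq]
      using congrArg star h
  have hconj : star (1 - p) * a * (1 - p) = a - p := by
    rw [star_sub, star_one, hp.isSelfAdjoint.star_eq]
    calc (1 - p) * a * (1 - p) = a - p * a - a * p + p * a * p := by noncomm_ring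
      _ = a - p := by rw [hpa, h, hp.isIdempotentElem.eq]; abel
  exact sub_nonneg.mp (hconj ▸ star_left_conjugate_nonneg ha (1 - p))

namespace Matrix

theorem mul_eq_mul_of_range_le {m n R : Type*} [Fintype n] [CommSemiring R]
    {A B : Matrix m n R} {C D : Matrix n n R} (h : A * C = B * C)
    (hr : LinearMap.range D.mulVecLin ≤ LinearMap.range C.mulVecLin) :
    A * D = B * D := by
  classical
  ext i j
  obtain ⟨w, hw⟩ := hr ⟨Pi.single j 1, rfl⟩
  have hw' : C *ᵥ w = D *ᵥ Pi.single j 1 := hw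
  have : (A * D) *ᵥ Pi.single j 1 = (B * D) *ᵥ Pi.single j 1 := by
    rw [← mulVec_mulVec, ← mulVec_mulVec, ← hw', mulVec_mulVec, mulVec_mulVec, h]
  simpa using congrFun this i

variable {n 𝕜 : Type*} [Fintype n] [RCLike 𝕜]

theorem trace_mul_vecMulVec_star (A : Matrix n n 𝕜) (x : n → 𝕜) :
    (A * vecMulVec x (star x)).trace = star x ⬝ᵥ (A *ᵥ x) := by
  rw [mul_vecMulVec, trace_vecMulVec, dotProduct_comm]

open scoped MatrixOrder in
theorem PosSemidef.trace_mul_nonneg {A B : Matrix n n 𝕜} (hA : A.PosSemidef)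
    (hB : B.PosSemidef) : 0 ≤ (A * B).trace := by
  classical
  set S := CFC.sqrt A
  have hS : Sᴴ = S := (CFC.sqrt_nonneg A).posSemidef.1
  have hSS : S * S = A := CFC.sqrt_mul_sqrt_self A hA.nonneg
  calc (0 : 𝕜) ≤ (S * B * Sᴴ).trace := (hB.mul_mul_conjTranspose_same S).trace_nonneg
    _ = (A * B).trace := by rw [hS, trace_mul_cycle, hSS]

open scoped MatrixOrder in
theorem PosSemidef.mul_eq_zero_of_trace_mul_eq_zero {A B : Matrix n n 𝕜} (hA : A.PosSemidef)
    (hB : B.PosSemidef) (h : (A * B).trace = 0) : A * B = 0 := by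
  classical
  set S := CFC.sqrt A
  set T := CFC.sqrt B
  have hS : Sᴴ = S := (CFC.sqrt_nonneg A).posSemidef.1
  have hT : Tᴴ = T := (CFC.sqrt_nonneg B).posSemidef.1
  have hSS : S * S = A := CFC.sqrt_mul_sqrt_self A hA.nonneg
  have hTT : T * T = B := CFC.sqrt_mul_sqrt_self B hB.nonneg
  -- `Tr[(TS)ᴴ(TS)] = Tr[S B S] = Tr[A B] = 0` forces `TS = 0`, and `AB = S (TS)ᴴ T`.
  have hTS : T * S = 0 := by
    rw [← trace_conjTranspose_mul_self_eq_zero_iff, conjTranspose_mul, hS, hT,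
      ← mul_assoc, mul_assoc S, hTT, trace_mul_cycle, hSS, h]
  calc A * B = S * (T * S)ᴴ * T := by
        rw [conjTranspose_mul, hS, hT, ← hSS, ← hTT]; noncomm_ring
    _ = 0 := by rw [hTS, conjTranspose_zero, mul_zero, zero_mul]

section TraceDual

variable {I J 𝕜 : Type*} [Fintype I] [DecidableEq I] [Fintype J] [RCLike 𝕜]

def choiMatrix (N : Matrix I I 𝕜 →ₗ[𝕜] Matrix J J 𝕜) : Matrix (I × J) (I × J) 𝕜 :=
  Matrix.of fun p q => N (single p.1 q.1 1) p.2 q.2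

omit [Fintype J] in
theorem map_eq_sum_single (N : Matrix I I 𝕜 →ₗ[𝕜] Matrix J J 𝕜) (A : Matrix I I 𝕜) :
    N A = ∑ p, ∑ q, A p q • N (single p q 1) := by
  conv_lhs => rw [matrix_eq_sum_single A]
  simp only [map_sum, ← map_smul, smul_single, smul_eq_mul, mul_one]

/-- The compressing matrix is `x̄ ⊗ 1`. -/
theorem map_vecMulVec_eq [DecidableEq J] (N : Matrix I I 𝕜 →ₗ[𝕜] Matrix J J 𝕜) (x : I → 𝕜) :
    N (vecMulVec x (star x)) =
      (of fun (p : I × J) s => star (x p.1) * (1 : Matrix J J 𝕜) p.2 s)ᴴ * choiMatrix N *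
        of fun (p : I × J) s => star (x p.1) * (1 : Matrix J J 𝕜) p.2 s := by
  ext r s
  rw [map_eq_sum_single N]
  simp only [Matrix.sum_apply, Matrix.smul_apply, mul_apply, conjTranspose_apply, of_apply,
    choiMatrix, Fintype.sum_prod_type, star_mul', star_star, one_apply, vecMulVec_apply,
    Finset.sum_mul, Pi.star_apply, smul_eq_mul]
  simp only [RCLike.star_def, MonoidWithZeroHom.map_ite_one_zero, mul_ite, mul_one, mul_zero,
    ite_mul, zero_mul, Finset.sum_ite_irrel, Finset.sum_ite_eq', Finset.mem_univ, if_true,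
    Finset.sum_const_zero]
  refine Finset.sum_comm.trans (Finset.sum_congr rfl fun _ _ => Finset.sum_congr rfl fun _ _ => ?_)
  ring

theorem PosSemidef.map_vecMulVec {N : Matrix I I 𝕜 →ₗ[𝕜] Matrix J J 𝕜}
    (hN : (choiMatrix N).PosSemidef) (x : I → 𝕜) : (N (vecMulVec x (star x))).PosSemidef := by
  classical
  exact map_vecMulVec_eq N x ▸ hN.conjTranspose_mul_mul_same _

/-- The Heisenberg-picture adjoint `N†(E)`, i.e. the adjoint of `N` for the trace pairing. -/
def traceDual (N : Matrix I I 𝕜 →ₗ[𝕜] Matrix J J 𝕜) (E : Matrix J J 𝕜) : Matrix I I 𝕜 :=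
  of fun i j => (E * N (single j i 1)).trace

theorem trace_traceDual_mul (N : Matrix I I 𝕜 →ₗ[𝕜] Matrix J J 𝕜) (E : Matrix J J 𝕜)
    (A : Matrix I I 𝕜) : (traceDual N E * A).trace = (E * N A).trace := by
  calc (traceDual N E * A).trace = ∑ i, ∑ j, (E * N (single j i 1)).trace * A j i := by
        simp only [trace, diag, mul_apply, traceDual, of_apply]
    _ = ∑ j, ∑ i, A j i * (E * N (single j i 1)).trace := by
        rw [Finset.sum_comm]; simp only [mul_comm]
    _ = (E * N A).trace := by
        rw [map_eq_sum_single N A]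
        simp only [Matrix.mul_sum, Matrix.mul_smul, trace_sum, trace_smul, smul_eq_mul]

omit [Fintype I] in
theorem traceDual_sub (N : Matrix I I 𝕜 →ₗ[𝕜] Matrix J J 𝕜) (E F : Matrix J J 𝕜) :
    traceDual N (E - F) = traceDual N E - traceDual N F := by
  ext i j
  simp [traceDual, sub_mul, trace_sub]

theorem traceDual_one [DecidableEq J] {N : Matrix I I 𝕜 →ₗ[𝕜] Matrix J J 𝕜}
    (hN : ∀ A, (N A).trace = A.trace) : traceDual N 1 = 1 := by
  ext i j
  rw [traceDual, of_apply, one_mul, hN, one_apply]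
  split_ifs with h
  · exact h ▸ trace_single_eq_same i 1
  · exact trace_single_eq_of_ne j i 1 (Ne.symm h)

omit [Fintype I] in
theorem isHermitian_traceDual {N : Matrix I I 𝕜 →ₗ[𝕜] Matrix J J 𝕜}
    (hN : (choiMatrix N).IsHermitian) {E : Matrix J J 𝕜} (hE : E.IsHermitian) :
    (traceDual N E).IsHermitian := by
  have hsingle (i j : I) : (N (single i j 1))ᴴ = N (single j i 1) := by
    ext r s
    simpa [choiMatrix] using congrFun (congrFun hN (j, r)) (i, s)
  ext i j
  simp only [conjTranspose_apply, traceDual, of_apply, ← trace_conjTranspose, conjTranspose_mul,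
    hsingle, hE.eq]
  exact trace_mul_comm _ _

theorem PosSemidef.traceDual {E : Matrix J J 𝕜} (hE : E.PosSemidef)
    {N : Matrix I I 𝕜 →ₗ[𝕜] Matrix J J 𝕜} (hN : (choiMatrix N).PosSemidef) :
    (traceDual N E).PosSemidef := by
  refine .of_dotProduct_mulVec_nonneg (isHermitian_traceDual hN.1 hE.1) fun x => ?_
  rw [← trace_mul_vecMulVec_star, trace_traceDual_mul]
  exact hE.trace_mul_nonneg (hN.map_vecMulVec x)

end TraceDual

end Matrix

namespace IsSupportProj

variable {n : Type*} [Fintype n] [DecidableEq n] {ρ P : Matrix n n ℂ}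

omit [DecidableEq n] in
theorem isStarProjection_s14 (hP : IsSupportProj ρ P) : IsStarProjection P :=
  ⟨hP.2.1, hP.1⟩

omit [DecidableEq n] in
open scoped MatrixOrder in
theorem posSemidef (hP : IsSupportProj ρ P) : P.PosSemidef :=
  Matrix.nonneg_iff_posSemidef.mp hP.isStarProjection_s14.nonneg

theorem mul_left_eq (hP : IsSupportProj ρ P) : P * ρ = ρ := by
  have hPP : P * P = 1 * P := by rw [one_mul, hP.2.1]
  simpa using Matrix.mul_eq_mul_of_range_le hPP hP.2.2.ge

theorem mul_eq_of_mul_eq (hP : IsSupportProj ρ P) {Λ : Matrix n n ℂ} (h : Λ * ρ = ρ) :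
    Λ * P = P := by
  have h' : Λ * ρ = 1 * ρ := by rw [one_mul, h]
  simpa using Matrix.mul_eq_mul_of_range_le h' hP.2.2.le

open scoped MatrixOrder in
theorem trace_mul_le_trace_mul_map {J : Type*} [Fintype J] [DecidableEq J] {σ : Matrix n n ℂ}
    (hP : IsSupportProj ρ P) (hρ : ρ.PosSemidef) (hσ : σ.PosSemidef)
    {N : Matrix n n ℂ →ₗ[ℂ] Matrix J J ℂ} (hN : IsCPTP N) {E : Matrix J J ℂ}
    (hE : E.PosSemidef) (hE1 : (1 - E).PosSemidef) (hEρ : (E * N ρ).trace = ρ.trace) :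
    (P * σ).trace ≤ (E * N σ).trace := by
  set Λ := Matrix.traceDual N E
  have hΛ : Λ.PosSemidef := hE.traceDual hN.1
  have hΛ1 : (1 - Λ).PosSemidef := by
    rw [← Matrix.traceDual_one hN.2, ← Matrix.traceDual_sub]
    exact hE1.traceDual hN.1
  have hΛρ : Λ * ρ = ρ := by
    have htr : ((1 - Λ) * ρ).trace = 0 := by
      rw [sub_mul, one_mul, Matrix.trace_sub, Matrix.trace_traceDual_mul, hEρ, sub_self]
    have h0 := hΛ1.mul_eq_zero_of_trace_mul_eq_zero hρ htr
    rw [sub_mul, one_mul, sub_eq_zero] at h0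
    exact h0.symm
  have hPΛ : (Λ - P).PosSemidef :=
    Matrix.le_iff.mp (hP.isStarProjection_s14.le_of_mul_eq hΛ.nonneg (hP.mul_eq_of_mul_eq hΛρ))
  calc (P * σ).trace ≤ (P * σ).trace + ((Λ - P) * σ).trace :=
        le_add_of_nonneg_right (hPΛ.trace_mul_nonneg hσ)
    _ = (E * N σ).trace := by
        rw [sub_mul, Matrix.trace_sub, add_sub_cancel, Matrix.trace_traceDual_mul]

end IsSupportProj

theorem e00_posSemidef : e00.PosSemidef := by
  rw [e00, ← Matrix.diagonal_single]
  exact .diagonal (Pi.single_nonneg.mpr zero_le_one)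

theorem e11_posSemidef : e11.PosSemidef := by
  rw [e11, ← Matrix.diagonal_single]
  exact .diagonal (Pi.single_nonneg.mpr zero_le_one)

theorem one_sub_e00 : (1 : Matrix (Fin 2) (Fin 2) ℂ) - e00 = e11 := by
  ext i j
  fin_cases i <;> fin_cases j <;> simp [e00, e11]

theorem trace_e00_mul (A : Matrix (Fin 2) (Fin 2) ℂ) : (e00 * A).trace = A 0 0 := by
  rw [e00, Matrix.trace_single_mul, one_smul]

theorem piM_one_div (t : ℝ) : piM (1 / t) = (t : ℂ) • e00 + (1 - t : ℂ) • e11 := by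
  rw [piM, one_div, inv_inv, ← Complex.ofReal_one, ← Complex.ofReal_sub, Complex.coe_smul,
    Complex.coe_smul]

theorem exact_distillable_distinguishability {n : Type*} [Fintype n] [DecidableEq n]
    (ρ σ : Matrix n n ℂ) (hρ : IsDensity ρ) (hσ : IsDensity σ)
    (P : Matrix n n ℂ) (hP : IsSupportProj ρ P)
    (hne : ((P * σ).trace).re ≠ 0) :
    (((P * ρ).trace) • e00 + (((1 - P) * ρ).trace) • e11 = e00
      ∧ ((P * σ).trace) • e00 + (((1 - P) * σ).trace) • e11
          = piM (1 / ((P * σ).trace).re))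
    ∧ ∀ (M : ℝ), 1 ≤ M → ∀ Q : Matrix n n ℂ →ₗ[ℂ] Matrix (Fin 2) (Fin 2) ℂ,
        IsCPTP Q → Q ρ = e00 → Q σ = piM M →
        Real.logb 2 M ≤ - Real.logb 2 (((P * σ).trace).re) := by
  obtain ⟨hρ, hρ1⟩ := hρ
  obtain ⟨hσ, hσ1⟩ := hσ
  have hPσ : 0 ≤ (P * σ).trace := hP.posSemidef.trace_mul_nonneg hσ
  have hPσ_re : (P * σ).trace = ((P * σ).trace.re : ℂ) := Complex.eq_re_of_ofReal_le hPσ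
  refine ⟨⟨?_, ?_⟩, fun M hM Q hQ hQρ hQσ => ?_⟩
  · rw [sub_mul, one_mul, hP.mul_left_eq, sub_self, trace_zero, hρ1, zero_smul, add_zero,
      one_smul]
  · rw [piM_one_div, sub_mul, one_mul, trace_sub, hσ1, ← hPσ_re]
  · have hle : (P * σ).trace ≤ ((M⁻¹ : ℝ) : ℂ) := by
      have := hP.trace_mul_le_trace_mul_map hρ hσ hQ e00_posSemidef
        (one_sub_e00 ▸ e11_posSemidef) (by rw [hQρ, trace_e00_mul, hρ1]; simp [e00])
      rwa [trace_e00_mul, hQσ, piM_apply_zero_zero] at this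
    have ht : 0 < (P * σ).trace.re := lt_of_le_of_ne (Complex.nonneg_iff.mp hPσ).1 hne.symm
    have hMt : M ≤ ((P * σ).trace.re)⁻¹ :=
      le_inv_of_le_inv₀ (by linarith) (Complex.real_le_real.mp (hPσ_re ▸ hle))
    calc Real.logb 2 M ≤ Real.logb 2 ((P * σ).trace.re)⁻¹ :=
          Real.logb_le_logb_of_le one_lt_two (by linarith) hMt
      _ = - Real.logb 2 ((P * σ).trace.re) := Real.logb_inv 2 _
end
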